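/- In the data center model, suppose that for all policies d and all j = 1,...,m, the quantity G^{(d)}(n,j) + c ≥ 0 (where G^{(d)}(n,j) = g^{(d)}(n,j−1) − g^{(d)}(n,j) and c = R − (P_{2,W}−P_{2,S})C_1/μ_2). Then for each fixed j and any policy d, the long-run average profit η^{d} is (weakly) increasing in the decision element d_{n,j} on {0,1,...,j}: if d' agrees with d except d'_{n,j} > d_{n,j} with both in {0,...,j}, then η^{d'} ≥ η^{d}, with strict inequality when G^{(d)}(n,j) + c > 0. -/

import Mathlib

open Finset

/-- Death rate of the data-center birth-death chain at state index `k`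
(states `0..n` are `(k,0)`; states `n+1..n+m` are `(n, k-n)`). -/
noncomputable def dcDeath (n : ℕ) (μ1 μ2 : ℝ) (d : ℕ → ℕ) (k : ℕ) : ℝ :=
  if k ≤ n then (k : ℝ) * μ1
  else (n : ℝ) * μ1 + (min (d (k - n)) (k - n) : ℝ) * μ2

/-- Policy-dependent generator of the data-center birth-death chain. -/
noncomputable def dcGen (n m : ℕ) (lam μ1 μ2 : ℝ) (d : ℕ → ℕ) (k l : ℕ) : ℝ :=
  if l = k + 1 then lam
  else if l + 1 = k then dcDeath n μ1 μ2 d k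
  else if l = k then -((if k < n + m then lam else 0) + dcDeath n μ1 μ2 d k)
  else 0

/-- `π` is a stationary probability vector for the policy-`d` chain. -/
def dcStationary (n m : ℕ) (lam μ1 μ2 : ℝ) (d : ℕ → ℕ) (π : ℕ → ℝ) : Prop :=
  (∀ l ∈ Finset.range (n + m + 1),
    ∑ k ∈ Finset.range (n + m + 1), π k * dcGen n m lam μ1 μ2 d k l = 0) ∧
  (∑ k ∈ Finset.range (n + m + 1), π k = 1) ∧
  (∀ k ∈ Finset.range (n + m + 1), 0 ≤ π k)

/-- Reward (profit rate) function of the data center at state index `k`. -/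
noncomputable def dcReward (n m : ℕ) (lam μ1 μ2 R P1W P2W P2S C1 C21 C22 C3 C4 : ℝ)
    (d : ℕ → ℕ) (k : ℕ) : ℝ :=
  if k ≤ n then
    R * ((k : ℝ) * μ1) - ((n : ℝ) * P1W + (m : ℝ) * P2S) * C1 - (k : ℝ) * C21
  else
    R * ((n : ℝ) * μ1 + (min (k - n) (d (k - n)) : ℝ) * μ2)
      - ((n : ℝ) * P1W + (d (k - n) : ℝ) * P2W + ((m : ℝ) - (d (k - n) : ℝ)) * P2S) * C1
      - ((n : ℝ) * C21 + ((k - n : ℕ) : ℝ) * C22)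
      - (n : ℝ) * μ1 * C3
      - (if k - n = m then lam * C4 else 0)

/-- `g` solves the Poisson equation `B^{(d)} g = η e - f` for the policy-`d` chain. -/
def dcPoisson (n m : ℕ) (lam μ1 μ2 : ℝ) (d : ℕ → ℕ) (f : ℕ → ℝ) (η : ℝ)
    (g : ℕ → ℝ) : Prop :=
  ∀ k ∈ Finset.range (n + m + 1),
    ∑ l ∈ Finset.range (n + m + 1), dcGen n m lam μ1 μ2 d k l * g l = η - f k

/-! The performance difference formula reduces `η^{d'} - η^{d}` to the single state `(n, j)`
where the policies differ; there it equals
`π^{(d')}(n,j) (d'_{n,j} - d_{n,j}) μ₂ (G^{(d)}(n,j) + c)`.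
The stationary law of a birth-death chain with positive rates is positive everywhere by
detailed balance, so the sign of the difference is that of `G^{(d)}(n,j) + c`. -/

section PerformanceDifference

variable {ι : Type*} (s : Finset ι) {Q Q' : ι → ι → ℝ} {f f' g p' : ι → ℝ} {η : ℝ}

theorem performance_difference (hstat : ∀ l ∈ s, ∑ k ∈ s, p' k * Q' k l = 0)
    (hsum : ∑ k ∈ s, p' k = 1) (hpois : ∀ k ∈ s, ∑ l ∈ s, Q k l * g l = η - f k) :
    ∑ k ∈ s, p' k * f' k - η =
      ∑ k ∈ s, p' k * ((f' k - f k) + ∑ l ∈ s, (Q' k l - Q k l) * g l) := by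
  have hQ' : ∑ k ∈ s, p' k * ∑ l ∈ s, Q' k l * g l = 0 := by
    simp_rw [Finset.mul_sum, ← mul_assoc]
    rw [Finset.sum_comm]
    simp_rw [← Finset.sum_mul]
    exact Finset.sum_eq_zero fun l hl => by rw [hstat l hl, zero_mul]
  have hQ : ∑ k ∈ s, p' k * ∑ l ∈ s, Q k l * g l = η - ∑ k ∈ s, p' k * f k := by
    rw [Finset.sum_congr rfl fun k hk => by rw [hpois k hk]]
    simp_rw [mul_sub, Finset.sum_sub_distrib, ← Finset.sum_mul, hsum, one_mul]
  simp_rw [sub_mul, Finset.sum_sub_distrib, mul_add, mul_sub, Finset.sum_add_distrib,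
    Finset.sum_sub_distrib, hQ', hQ]
  ring

theorem performance_difference_of_eq_off {k₀ : ι} (hk₀ : k₀ ∈ s)
    (hQ : ∀ k ∈ s, k ≠ k₀ → ∀ l, Q' k l = Q k l) (hf : ∀ k ∈ s, k ≠ k₀ → f' k = f k)
    (hstat : ∀ l ∈ s, ∑ k ∈ s, p' k * Q' k l = 0)
    (hsum : ∑ k ∈ s, p' k = 1) (hpois : ∀ k ∈ s, ∑ l ∈ s, Q k l * g l = η - f k) :
    ∑ k ∈ s, p' k * f' k - η =
      p' k₀ * ((f' k₀ - f k₀) + ∑ l ∈ s, (Q' k₀ l - Q k₀ l) * g l) := by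
  rw [performance_difference s hstat hsum hpois]
  refine Finset.sum_eq_single_of_mem k₀ hk₀ fun k hk hne => ?_
  simp [hQ k hk hne, hf k hk hne]

end PerformanceDifference

/-- Generator of the birth-death chain on `{0, …, N}`. The entry `(N, N + 1)` lies outside the
state space; it is never summed, and the diagonal at `N` omits the birth rate. -/
def birthDeathGen (N : ℕ) (birth death : ℕ → ℝ) (k l : ℕ) : ℝ :=
  if l = k + 1 then birth k
  else if l + 1 = k then death k
  else if l = k then -((if k < N then birth k else 0) + death k)
  else 0

section BirthDeath

variable {N : ℕ} {birth death : ℕ → ℝ}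

theorem birthDeathGen_colSum (π : ℕ → ℝ) {l : ℕ} (hl : l ≤ N) :
    ∑ k ∈ Finset.range (N + 1), π k * birthDeathGen N birth death k l =
      (if 1 ≤ l then π (l - 1) * birth (l - 1) else 0)
      + (if l < N then π (l + 1) * death (l + 1) else 0)
      - π l * ((if l < N then birth l else 0) + death l) := by
  have hterm : ∀ k, π k * birthDeathGen N birth death k l =
      (if 1 ≤ l then (if k = l - 1 then π k * birth k else 0) else 0)
      + (if k = l + 1 then π k * death k else 0)
      + (if k = l then -(π k * ((if k < N then birth k else 0) + death k)) else 0) := by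
    intro k
    unfold birthDeathGen
    split_ifs <;> first | ring1 | (exfalso; omega)
  simp only [hterm, Finset.sum_add_distrib, Finset.sum_ite_eq', Finset.mem_range,
    Finset.sum_ite_irrel, Finset.sum_const_zero]
  by_cases h1 : 1 ≤ l <;> by_cases h2 : l < N <;>
    simp only [h1, h2, ↓reduceIte, show l < N + 1 by omega, show l - 1 < N + 1 by omega,
      Order.lt_add_one_iff, Order.add_one_le_iff, add_zero, zero_add, zero_sub] <;>
    ring

theorem birthDeathGen_detailed_balance {π : ℕ → ℝ} (hdeath₀ : death 0 = 0)
    (hstat : ∀ l ∈ Finset.range (N + 1),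
      ∑ k ∈ Finset.range (N + 1), π k * birthDeathGen N birth death k l = 0) :
    ∀ l < N, π (l + 1) * death (l + 1) = π l * birth l := by
  intro l
  induction l with
  | zero =>
    intro h0
    have h := hstat 0 (by simp)
    rw [birthDeathGen_colSum π (by omega)] at h
    simp only [Nat.one_ne_zero, Nat.le_zero, if_false, if_pos h0, hdeath₀] at h
    linarith
  | succ l ih =>
    intro hl
    have h := hstat (l + 1) (by simp; omega)
    rw [birthDeathGen_colSum π (by omega)] at h
    simp only [Nat.le_add_left, if_true, Nat.add_sub_cancel, if_pos hl] at h
    linarith [ih (by omega)]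

theorem pos_of_detailed_balance {π : ℕ → ℝ} (hbirth : ∀ k < N, 0 < birth k)
    (hdeath : ∀ k, 1 ≤ k → k ≤ N → 0 < death k)
    (hbal : ∀ l < N, π (l + 1) * death (l + 1) = π l * birth l)
    (hsum : ∑ k ∈ Finset.range (N + 1), π k = 1) :
    ∀ k ≤ N, 0 < π k := by
  have hsign : ∀ k ≤ N, (0 < π k ↔ 0 < π 0) := by
    intro k
    induction k with
    | zero => simp
    | succ k ih =>
      intro hk
      rw [← ih (by omega), ← mul_pos_iff_of_pos_right (hdeath (k + 1) (by omega) hk),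
        hbal k (by omega), mul_pos_iff_of_pos_right (hbirth k (by omega))]
  have h₀ : 0 < π 0 := by
    by_contra h
    have hle : ∑ k ∈ Finset.range (N + 1), π k ≤ 0 :=
      Finset.sum_nonpos fun k hk => not_lt.mp fun hpos =>
        h ((hsign k (by simpa [Nat.lt_succ_iff] using hk)).mp hpos)
    linarith
  exact fun k hk => (hsign k hk).mpr h₀

theorem birthDeathGen_sub_sum_mul (death' g : ℕ → ℝ) {k : ℕ} (hk₁ : 1 ≤ k) (hkN : k ≤ N) :
    ∑ l ∈ Finset.range (N + 1),
        (birthDeathGen N birth death' k l - birthDeathGen N birth death k l) * g l =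
      (death' k - death k) * (g (k - 1) - g k) := by
  have hterm : ∀ l, (birthDeathGen N birth death' k l - birthDeathGen N birth death k l) * g l =
      (if l = k - 1 then (death' k - death k) * g l else 0)
      - (if l = k then (death' k - death k) * g l else 0) := by
    intro l
    unfold birthDeathGen
    split_ifs <;> first | ring1 | (exfalso; omega)
  simp only [hterm, Finset.sum_sub_distrib, Finset.sum_ite_eq', Finset.mem_range,
    if_pos (show k - 1 < N + 1 by omega), if_pos (show k < N + 1 by omega)]
  ring

end BirthDeath

section DataCenter

variable {n m : ℕ} {lam μ1 μ2 : ℝ}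

theorem dcGen_eq_birthDeathGen (d : ℕ → ℕ) :
    dcGen n m lam μ1 μ2 d = birthDeathGen (n + m) (fun _ => lam) (dcDeath n μ1 μ2 d) :=
  rfl

theorem dcDeath_pos (hn : 1 ≤ n) (hμ1 : 0 < μ1) (hμ2 : 0 ≤ μ2) (d : ℕ → ℕ) {k : ℕ}
    (hk : 1 ≤ k) : 0 < dcDeath n μ1 μ2 d k := by
  unfold dcDeath
  split_ifs
  · have : (0 : ℝ) < k := by exact_mod_cast hk
    positivity
  · have : (0 : ℝ) < n := by exact_mod_cast hn
    have : (0 : ℝ) ≤ min ((d (k - n) : ℕ) : ℝ) ((k : ℝ) - n) :=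
      le_min (by positivity) (by norm_num; omega)
    positivity

theorem dcStationary_pos (hn : 1 ≤ n) (hlam : 0 < lam) (hμ1 : 0 < μ1) (hμ2 : 0 ≤ μ2)
    {d : ℕ → ℕ} {π : ℕ → ℝ} (hπ : dcStationary n m lam μ1 μ2 d π) :
    ∀ k ≤ n + m, 0 < π k := by
  rw [dcStationary, dcGen_eq_birthDeathGen] at hπ
  exact pos_of_detailed_balance (fun _ _ => hlam) (fun k hk _ => dcDeath_pos hn hμ1 hμ2 d hk)
    (birthDeathGen_detailed_balance (by simp [dcDeath]) hπ.1) hπ.2.1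

theorem dcDeath_congr {d d' : ℕ → ℕ} {k : ℕ} (h : d (k - n) = d' (k - n)) :
    dcDeath n μ1 μ2 d k = dcDeath n μ1 μ2 d' k := by
  simp only [dcDeath, h]

theorem dcReward_congr {R P1W P2W P2S C1 C21 C22 C3 C4 : ℝ} {d d' : ℕ → ℕ} {k : ℕ}
    (h : d (k - n) = d' (k - n)) :
    dcReward n m lam μ1 μ2 R P1W P2W P2S C1 C21 C22 C3 C4 d k =
      dcReward n m lam μ1 μ2 R P1W P2W P2S C1 C21 C22 C3 C4 d' k := by
  simp only [dcReward, h]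

theorem dcDeath_add {d : ℕ → ℕ} {j : ℕ} (hj : 1 ≤ j) (hdj : d j ≤ j) :
    dcDeath n μ1 μ2 d (n + j) = n * μ1 + d j * μ2 := by
  have hcast : ((n + j : ℕ) : ℝ) - n = j := by push_cast; ring
  rw [dcDeath, if_neg (by omega), Nat.add_sub_cancel_left, hcast,
    min_eq_left (by exact_mod_cast hdj)]

theorem dcReward_sub {R P1W P2W P2S C1 C21 C22 C3 C4 : ℝ} (hμ2 : μ2 ≠ 0) {d d' : ℕ → ℕ}
    {j : ℕ} (hj : 1 ≤ j) (hdj : d j ≤ j) (hdj' : d' j ≤ j) :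
    dcReward n m lam μ1 μ2 R P1W P2W P2S C1 C21 C22 C3 C4 d' (n + j)
      - dcReward n m lam μ1 μ2 R P1W P2W P2S C1 C21 C22 C3 C4 d (n + j) =
      (d' j - d j) * μ2 * (R - (P2W - P2S) * C1 / μ2) := by
  have hcast : ((n + j : ℕ) : ℝ) - n = j := by push_cast; ring
  simp only [dcReward, if_neg (show ¬ n + j ≤ n by omega), Nat.add_sub_cancel_left, hcast,
    min_eq_right (show ((d j : ℕ) : ℝ) ≤ j by exact_mod_cast hdj),
    min_eq_right (show ((d' j : ℕ) : ℝ) ≤ j by exact_mod_cast hdj')]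
  field_simp
  ring

end DataCenter

theorem stmt8_general (n m : ℕ) (hn : 1 ≤ n)
    (lam μ1 μ2 R P1W P2W P2S C1 C21 C22 C3 C4 : ℝ)
    (hlam : 0 < lam) (hμ1 : 0 < μ1) (hμ2 : 0 < μ2)
    (π : (ℕ → ℕ) → ℕ → ℝ)
    (hπ : ∀ d : ℕ → ℕ, (∀ j, d j ≤ m) → dcStationary n m lam μ1 μ2 d (π d))
    (η : (ℕ → ℕ) → ℝ)
    (hη : ∀ d : ℕ → ℕ, η d = ∑ k ∈ Finset.range (n + m + 1),
      π d k * dcReward n m lam μ1 μ2 R P1W P2W P2S C1 C21 C22 C3 C4 d k)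
    (g : (ℕ → ℕ) → ℕ → ℝ)
    (hg : ∀ d : ℕ → ℕ, (∀ j, d j ≤ m) → dcPoisson n m lam μ1 μ2 d
      (dcReward n m lam μ1 μ2 R P1W P2W P2S C1 C21 C22 C3 C4 d) (η d) (g d))
    (c : ℝ) (hc : c = R - (P2W - P2S) * C1 / μ2)
    (hsign : ∀ d : ℕ → ℕ, (∀ j, d j ≤ m) → ∀ j, 1 ≤ j → j ≤ m →
      0 ≤ (g d (n + j - 1) - g d (n + j)) + c) :
    ∀ (j0 : ℕ), 1 ≤ j0 → j0 ≤ m →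
    ∀ d d' : ℕ → ℕ, (∀ j, d j ≤ m) → (∀ j, d' j ≤ m) →
      (∀ j, j ≠ j0 → d j = d' j) →
      d j0 < d' j0 → d' j0 ≤ j0 →
      η d ≤ η d' ∧
        (0 < (g d (n + j0 - 1) - g d (n + j0)) + c → η d < η d') := by
  intro j0 hj1 hjm d d' hd hd' hagree hlt hle
  have hstat := hπ d' hd'
  have hoff : ∀ k, k ≠ n + j0 → d (k - n) = d' (k - n) := fun k hk => hagree _ (by omega)
  have hdiff : η d' - η d = π d' (n + j0) *
      ((d' j0 - d j0) * μ2 * ((g d (n + j0 - 1) - g d (n + j0)) + c)) := by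
    have hQ : ∀ k ∈ Finset.range (n + m + 1), k ≠ n + j0 → ∀ l,
        dcGen n m lam μ1 μ2 d' k l = dcGen n m lam μ1 μ2 d k l := fun k _ hk l => by
      simp only [dcGen, dcDeath_congr (hoff k hk)]
    rw [hη d', performance_difference_of_eq_off _ (by simp; omega) hQ
        (fun k _ hk => dcReward_congr (hoff k hk).symm) hstat.1 hstat.2.1 (hg d hd),
      dcReward_sub hμ2.ne' hj1 (by omega) hle, dcGen_eq_birthDeathGen, dcGen_eq_birthDeathGen,
      birthDeathGen_sub_sum_mul _ _ (k := n + j0) (by omega) (by omega), dcDeath_add hj1 hle,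
      dcDeath_add hj1 (by omega), hc]
    ring
  have hπpos : 0 < π d' (n + j0) := dcStationary_pos hn hlam hμ1 hμ2.le hstat _ (by omega)
  have hΔ : (0 : ℝ) < d' j0 - d j0 := sub_pos.mpr (by exact_mod_cast hlt)
  refine ⟨?_, fun hG => ?_⟩
  · have := mul_nonneg hπpos.le (mul_nonneg (mul_pos hΔ hμ2).le (hsign d hd j0 hj1 hjm))
    linarith
  · have := mul_pos hπpos (mul_pos (mul_pos hΔ hμ2) hG)
    linarith

/-- if `G^{(d)}(n,j) + c ≥ 0` for all policies `d` and all
`j = 1,...,m`, then the long-run average profit is weakly increasing in each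
decision element `d_{n,j}` on `{0,...,j}`, strictly when the sign is strict. -/
theorem stmt8 (n m : ℕ) (hn : 1 ≤ n) (hm : 1 ≤ m)
    (lam μ1 μ2 R P1W P2W P2S C1 C21 C22 C3 C4 : ℝ)
    (hlam : 0 < lam) (hμ1 : 0 < μ1) (hμ2 : 0 < μ2)
    (hP2S : 0 < P2S) (hP : P2S < P2W) (hC1 : 0 < C1)
    (π : (ℕ → ℕ) → ℕ → ℝ)
    (hπ : ∀ d : ℕ → ℕ, (∀ j, d j ≤ m) → dcStationary n m lam μ1 μ2 d (π d))
    (η : (ℕ → ℕ) → ℝ)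
    (hη : ∀ d : ℕ → ℕ, η d = ∑ k ∈ Finset.range (n + m + 1),
      π d k * dcReward n m lam μ1 μ2 R P1W P2W P2S C1 C21 C22 C3 C4 d k)
    (g : (ℕ → ℕ) → ℕ → ℝ)
    (hg : ∀ d : ℕ → ℕ, (∀ j, d j ≤ m) → dcPoisson n m lam μ1 μ2 d
      (dcReward n m lam μ1 μ2 R P1W P2W P2S C1 C21 C22 C3 C4 d) (η d) (g d))
    (c : ℝ) (hc : c = R - (P2W - P2S) * C1 / μ2)
    (hsign : ∀ d : ℕ → ℕ, (∀ j, d j ≤ m) → ∀ j, 1 ≤ j → j ≤ m →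
      0 ≤ (g d (n + j - 1) - g d (n + j)) + c) :
    ∀ (j0 : ℕ), 1 ≤ j0 → j0 ≤ m →
    ∀ d d' : ℕ → ℕ, (∀ j, d j ≤ m) → (∀ j, d' j ≤ m) →
      (∀ j, j ≠ j0 → d j = d' j) →
      d j0 < d' j0 → d' j0 ≤ j0 →
      η d ≤ η d' ∧
        (0 < (g d (n + j0 - 1) - g d (n + j0)) + c → η d < η d') :=
  stmt8_general n m hn lam μ1 μ2 R P1W P2W P2S C1 C21 C22 C3 C4 hlam hμ1 hμ2 π hπ η hη g hg c hc
    hsign
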